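/- arXiv:2205.11596 — 2 statements merged into one kernel-verified Lean document; each statement's English description precedes it below -/
import Mathlib

section
/- Let p ≥ 0 be an integer, let κ > 0 and n > 0 be real with n ≠ 1, and let α ∈ ℝ satisfy the transmission boundary conditions J_p(κ) = α·J_p(√n·κ) and J_p'(κ) = α·√n·J_p'(√n·κ). Then ∫₀¹ ( J_p(κ·r)² − n·α²·J_p(√n·κ·r)² )·r dr = ((1 − n)/2)·J_p(κ)². -/
open Complex Real Filter Set

/-- Bessel function of the first kind of integer order `p`. -/
noncomputable def besselJ (p : ℕ) (z : ℂ) : ℂ :=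
  ∑' m : ℕ, ((-1 : ℂ) ^ m / ((Nat.factorial m : ℂ) * (Nat.factorial (m + p) : ℂ)))
    * (z / 2) ^ (2 * m + p)

/-- Derivative of the Bessel function. -/
noncomputable def besselJ' (p : ℕ) (z : ℂ) : ℂ := deriv (besselJ p) z

/-- The ITE determinant function `F_p(κ, n)`. -/
noncomputable def Fp (p : ℕ) (κ : ℂ) (n : ℝ) : ℂ :=
  κ * (besselJ' p κ * besselJ p ((Real.sqrt n : ℂ) * κ)
    - (Real.sqrt n : ℂ) * besselJ p κ * besselJ' p ((Real.sqrt n : ℂ) * κ))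

/-! Differentiating the series termwise (it is dominated by `(4 (R + 1)) ^ (2m + p) / m!` on the
ball of radius `R`) gives Bessel's equation `z² J'' + z J' + (z² - p²) J = 0`. Hence
`w² J'(w)² + (w² - p²) J(w)²` is a primitive of `2 w J(w)²`, which yields Lommel's formula
`2 μ² ∫₀¹ J(μ r)² r dr = μ² J'(μ)² + (μ² - p²) J(μ)²`. Subtracting `α²` times this formula at
`μ = √n κ` from the one at `μ = κ`, the boundary conditions cancel the `J'` terms and leave
`(κ² - n κ²) J(κ)²`. -/

section SeriesDerivative

variable {α 𝕜 F : Type*} [RCLike 𝕜] [NormedAddCommGroup F] [NormedSpace 𝕜 F] [CompleteSpace F]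

theorem hasDerivAt_tsum_of_norm_le {g g' : α → 𝕜 → F} {u : ℝ → α → ℝ}
    (hu : ∀ R, Summable (u R)) (hg : ∀ n y, HasDerivAt (g n) (g' n y) y)
    (hg' : ∀ R n y, ‖y‖ ≤ R → ‖g' n y‖ ≤ u R n) (hg0 : Summable fun n => g n 0) (z : 𝕜) :
    HasDerivAt (fun w => ∑' n, g n w) (∑' n, g' n z) z := by
  have hz : z ∈ Metric.ball (0 : 𝕜) (‖z‖ + 1) := by simp
  exact hasDerivAt_tsum_of_isPreconnected (hu (‖z‖ + 1)) Metric.isOpen_ball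
    (convex_ball 0 _).isPreconnected (fun n y _ => hg n y)
    (fun n y hy => hg' _ n y (by simpa using (Metric.mem_ball.1 hy).le))
    (Metric.mem_ball_self (by positivity)) hg0 hz

end SeriesDerivative

lemma hasDerivAt_mul_half_pow (a : ℂ) (e : ℕ) (z : ℂ) :
    HasDerivAt (fun w => a * (w / 2) ^ e) (a * (e / 2) * (z / 2) ^ (e - 1)) z := by
  refine ((((hasDerivAt_id z).div_const 2).pow e).const_mul a).congr_deriv ?_
  simp only [id]
  ring

lemma natCast_mul_succ_le_four_pow (k : ℕ) : (k : ℝ) * (k + 1) ≤ 4 ^ k := by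
  have h : k + 1 ≤ 2 ^ k := Nat.lt_two_pow_self
  have : k * (k + 1) ≤ 4 ^ k :=
    calc k * (k + 1) ≤ 2 ^ k * 2 ^ k := Nat.mul_le_mul (by omega) h
      _ = 4 ^ k := by rw [← mul_pow]; norm_num
  exact_mod_cast this

noncomputable def besselCoeff (p m : ℕ) : ℂ :=
  (-1 : ℂ) ^ m / ((Nat.factorial m : ℂ) * (Nat.factorial (m + p) : ℂ))

noncomputable def besselTerm (p m : ℕ) (z : ℂ) : ℂ :=
  besselCoeff p m * (z / 2) ^ (2 * m + p)

noncomputable def besselTerm' (p m : ℕ) (z : ℂ) : ℂ :=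
  besselCoeff p m * ((2 * m + p : ℕ) / 2) * (z / 2) ^ (2 * m + p - 1)

noncomputable def besselTerm'' (p m : ℕ) (z : ℂ) : ℂ :=
  besselCoeff p m * ((2 * m + p : ℕ) * ((2 * m + p : ℕ) - 1) / 4) * (z / 2) ^ (2 * m + p - 2)

noncomputable def besselMajorant (p : ℕ) (R : ℝ) (m : ℕ) : ℝ :=
  (4 * (R + 1)) ^ (2 * m + p) / m.factorial

lemma besselJ_eq_tsum (p : ℕ) (z : ℂ) : besselJ p z = ∑' m, besselTerm p m z := rfl

lemma norm_besselCoeff_le (p m : ℕ) : ‖besselCoeff p m‖ ≤ 1 / m.factorial := by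
  have h : (1 : ℝ) ≤ (m + p).factorial := by exact_mod_cast (m + p).factorial_pos
  simp only [besselCoeff, norm_div, norm_mul, norm_pow, norm_neg, norm_one, one_pow,
    Complex.norm_natCast]
  gcongr
  exact le_mul_of_one_le_right (by positivity) h

lemma besselCoeff_succ_mul (p m : ℕ) :
    besselCoeff p (m + 1) * ((m + 1) * (m + 1 + p)) = -besselCoeff p m := by
  have hfac : ((m + 1 + p).factorial : ℂ) = (m + 1 + p) * (m + p).factorial := by
    rw [show m + 1 + p = m + p + 1 by omega, Nat.factorial_succ]
    push_cast
    ring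
  have hm : (m : ℂ) + 1 ≠ 0 := by exact_mod_cast m.succ_ne_zero
  have hmp : (m : ℂ) + 1 + p ≠ 0 := by norm_cast; omega
  simp only [besselCoeff, hfac, Nat.factorial_succ, Nat.cast_mul, Nat.cast_succ]
  field_simp
  ring

lemma summable_besselMajorant (p : ℕ) (R : ℝ) : Summable (besselMajorant p R) := by
  refine ((Real.summable_pow_div_factorial ((4 * (R + 1)) ^ 2)).mul_left
    ((4 * (R + 1)) ^ p)).congr fun m => ?_
  simp only [besselMajorant, pow_add, pow_mul]
  ring

lemma norm_besselCoeff_mul_le {p m j : ℕ} {q z : ℂ} {R : ℝ} (hq : ‖q‖ ≤ 4 ^ (2 * m + p))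
    (hj : j ≤ 2 * m + p) (hz : ‖z‖ ≤ R) :
    ‖besselCoeff p m * q * (z / 2) ^ j‖ ≤ besselMajorant p R m := by
  have hR : 1 ≤ R + 1 := by linarith [norm_nonneg z]
  have hpow : ‖(z / 2) ^ j‖ ≤ (R + 1) ^ (2 * m + p) := by
    rw [norm_pow, norm_div, Complex.norm_two]
    calc (‖z‖ / 2) ^ j ≤ (R + 1) ^ j := by gcongr; linarith [norm_nonneg z]
      _ ≤ (R + 1) ^ (2 * m + p) := pow_le_pow_right₀ hR hj
  calc ‖besselCoeff p m * q * (z / 2) ^ j‖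
      ≤ 1 / m.factorial * 4 ^ (2 * m + p) * (R + 1) ^ (2 * m + p) := by
        rw [norm_mul, norm_mul]
        gcongr
        exact norm_besselCoeff_le p m
    _ = besselMajorant p R m := by rw [besselMajorant, mul_pow]; ring

lemma norm_besselTerm_le {p m : ℕ} {z : ℂ} {R : ℝ} (hz : ‖z‖ ≤ R) :
    ‖besselTerm p m z‖ ≤ besselMajorant p R m := by
  simpa [besselTerm] using
    norm_besselCoeff_mul_le (q := 1) (by simpa using one_le_pow₀ (by norm_num)) le_rfl hz

lemma norm_besselTerm'_le {p m : ℕ} {z : ℂ} {R : ℝ} (hz : ‖z‖ ≤ R) :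
    ‖besselTerm' p m z‖ ≤ besselMajorant p R m := by
  refine norm_besselCoeff_mul_le ?_ (Nat.sub_le _ _) hz
  rw [norm_div, Complex.norm_natCast, Complex.norm_two]
  nlinarith [natCast_mul_succ_le_four_pow (2 * m + p), Nat.cast_nonneg (α := ℝ) (2 * m + p)]

lemma norm_besselTerm''_le {p m : ℕ} {z : ℂ} {R : ℝ} (hz : ‖z‖ ≤ R) :
    ‖besselTerm'' p m z‖ ≤ besselMajorant p R m := by
  refine norm_besselCoeff_mul_le ?_ (Nat.sub_le _ _) hz
  set k := 2 * m + p
  have hk1 : ‖(k : ℂ) - 1‖ ≤ k + 1 := by simpa using norm_sub_le (k : ℂ) 1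
  rw [norm_div, norm_mul, Complex.norm_natCast, Complex.norm_ofNat]
  have : (k : ℝ) * ‖(k : ℂ) - 1‖ ≤ k * (k + 1) := by gcongr
  linarith [natCast_mul_succ_le_four_pow k, pow_nonneg (show (0 : ℝ) ≤ 4 by norm_num) k]

lemma hasDerivAt_besselTerm (p m : ℕ) (z : ℂ) :
    HasDerivAt (besselTerm p m) (besselTerm' p m z) z :=
  hasDerivAt_mul_half_pow _ _ z

lemma hasDerivAt_besselTerm' (p m : ℕ) (z : ℂ) :
    HasDerivAt (besselTerm' p m) (besselTerm'' p m z) z := by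
  refine (hasDerivAt_mul_half_pow (besselCoeff p m * ((2 * m + p : ℕ) / 2)) (2 * m + p - 1)
    z).congr_deriv ?_
  unfold besselTerm''
  generalize 2 * m + p = k
  cases k with
  | zero => simp
  | succ k =>
    rw [show k + 1 - 1 - 1 = k + 1 - 2 by omega, Nat.add_sub_cancel]
    push_cast
    ring

theorem hasDerivAt_besselJ (p : ℕ) (z : ℂ) :
    HasDerivAt (besselJ p) (∑' m, besselTerm' p m z) z :=
  hasDerivAt_tsum_of_norm_le (summable_besselMajorant p) (hasDerivAt_besselTerm p)
    (fun _ _ _ hy => norm_besselTerm'_le hy)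
    (.of_norm_bounded (summable_besselMajorant p 0) fun _ => norm_besselTerm_le (by simp)) z

theorem besselJ'_eq_tsum (p : ℕ) (z : ℂ) : besselJ' p z = ∑' m, besselTerm' p m z :=
  (hasDerivAt_besselJ p z).deriv

theorem hasDerivAt_besselJ' (p : ℕ) (z : ℂ) :
    HasDerivAt (besselJ' p) (∑' m, besselTerm'' p m z) z := by
  rw [funext (besselJ'_eq_tsum p)]
  exact hasDerivAt_tsum_of_norm_le (summable_besselMajorant p) (hasDerivAt_besselTerm' p)
    (fun _ _ _ hy => norm_besselTerm''_le hy)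
    (.of_norm_bounded (summable_besselMajorant p 0) fun _ => norm_besselTerm'_le (by simp)) z

theorem differentiable_besselJ (p : ℕ) : Differentiable ℂ (besselJ p) :=
  fun z => (hasDerivAt_besselJ p z).differentiableAt


lemma besselTerm_euler_combination (p m : ℕ) (z : ℂ) :
    z ^ 2 * besselTerm'' p m z + z * besselTerm' p m z - p ^ 2 * besselTerm p m z
      = besselCoeff p m * (4 * m * (m + p)) * (z / 2) ^ (2 * m + p) := by
  have hk : ∀ k : ℕ, z ^ 2 * (besselCoeff p m * (k * (k - 1) / 4) * (z / 2) ^ (k - 2))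
      + z * (besselCoeff p m * (k / 2) * (z / 2) ^ (k - 1))
      = besselCoeff p m * k ^ 2 * (z / 2) ^ k := by
    rintro (_ | _ | k)
    · simp
    · simp only [Nat.cast_one, sub_self, mul_zero, zero_div, zero_mul, zero_add]
      ring
    · rw [Nat.add_sub_cancel, show k + 1 + 1 - 2 = k by omega]
      push_cast
      ring
  rw [besselTerm'', besselTerm', hk, besselTerm]
  push_cast
  ring

lemma besselTerm_shift (p m : ℕ) (z : ℂ) :
    besselCoeff p (m + 1) * (4 * (m + 1 : ℕ) * ((m + 1 : ℕ) + p)) * (z / 2) ^ (2 * (m + 1) + p)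
      = -(z ^ 2 * besselTerm p m z) := by
  rw [besselTerm, show 2 * (m + 1) + p = 2 * m + p + 2 by ring, pow_add]
  push_cast
  linear_combination (4 * (z / 2) ^ (2 * m + p) * (z / 2) ^ 2) * besselCoeff_succ_mul p m

theorem besselJ_ode (p : ℕ) (z : ℂ) :
    z ^ 2 * deriv (besselJ' p) z + z * besselJ' p z + (z ^ 2 - p ^ 2) * besselJ p z = 0 := by
  have hbound (f : ℕ → ℂ → ℂ) (hf : ∀ m, ‖f m z‖ ≤ besselMajorant p ‖z‖ m) :
      Summable (f · z) :=
    .of_norm_bounded (summable_besselMajorant p _) hf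
  have h0 := hbound _ fun _ => norm_besselTerm_le le_rfl
  have h1 := hbound _ fun _ => norm_besselTerm'_le le_rfl
  have h2 := hbound _ fun _ => norm_besselTerm''_le le_rfl
  -- The coefficients `k² - p² = 4m(m+p)` of `z²J'' + zJ' - p²J` vanish at `m = 0`, and
  -- shifted by one index they are those of `-z²J`.
  set g : ℕ → ℂ := fun m => besselCoeff p m * (4 * m * (m + p)) * (z / 2) ^ (2 * m + p)
  have hg : Summable g := by
    refine (((h2.mul_left (z ^ 2)).add (h1.mul_left z)).sub (h0.mul_left ((p : ℂ) ^ 2))).congr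
      fun m => ?_
    exact besselTerm_euler_combination p m z
  have hsum : ∑' m, g m = -(z ^ 2 * besselJ p z) := by
    rw [hg.tsum_eq_zero_add, besselJ_eq_tsum, ← tsum_mul_left, ← tsum_neg]
    simp [g, besselTerm_shift]
  have hsplit : ∑' m, g m
      = z ^ 2 * deriv (besselJ' p) z + z * besselJ' p z - p ^ 2 * besselJ p z := by
    rw [(hasDerivAt_besselJ' p z).deriv, besselJ'_eq_tsum, besselJ_eq_tsum, ← tsum_mul_left,
      ← tsum_mul_left, ← tsum_mul_left, ← (h2.mul_left _).tsum_add (h1.mul_left _),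
      ← ((h2.mul_left _).add (h1.mul_left _)).tsum_sub (h0.mul_left _)]
    exact tsum_congr fun m => (besselTerm_euler_combination p m z).symm
  linear_combination hsum - hsplit

lemma besselJ_zero_of_ne_zero {p : ℕ} (hp : p ≠ 0) : besselJ p 0 = 0 := by
  simp [besselJ, hp]

lemma hasDerivAt_lommel_primitive (p : ℕ) (w : ℂ) :
    HasDerivAt (fun w => w ^ 2 * besselJ' p w ^ 2 + (w ^ 2 - p ^ 2) * besselJ p w ^ 2)
      (2 * w * besselJ p w ^ 2) w := by
  have hJ : HasDerivAt (besselJ p) (besselJ' p w) w :=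
    (differentiable_besselJ p w).hasDerivAt
  have hJ' := (hasDerivAt_besselJ' p w).differentiableAt.hasDerivAt
  refine ((((hasDerivAt_pow 2 w).mul (hJ'.pow 2)).add
    (((hasDerivAt_pow 2 w).sub_const ((p : ℂ) ^ 2)).mul (hJ.pow 2)))).congr_deriv ?_
  simp only [Pi.pow_apply]
  linear_combination 2 * besselJ' p w * besselJ_ode p w

theorem besselJ_lommel_integral (p : ℕ) (μ : ℂ) :
    2 * μ ^ 2 * ∫ r in (0 : ℝ)..1, besselJ p (μ * r) ^ 2 * r
      = μ ^ 2 * besselJ' p μ ^ 2 + (μ ^ 2 - p ^ 2) * besselJ p μ ^ 2 := by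
  set G : ℂ → ℂ := fun w => w ^ 2 * besselJ' p w ^ 2 + (w ^ 2 - p ^ 2) * besselJ p w ^ 2
  have hG (r : ℝ) :
      HasDerivAt (fun r : ℝ => G (μ * r)) (2 * μ ^ 2 * (besselJ p (μ * r) ^ 2 * r)) r := by
    refine (((hasDerivAt_lommel_primitive p (μ * r)).comp (r : ℂ)
      ((hasDerivAt_id _).const_mul μ)).comp_ofReal).congr_deriv ?_
    ring
  have hcont : Continuous fun r : ℝ => 2 * μ ^ 2 * (besselJ p (μ * r) ^ 2 * r) := by
    have := (differentiable_besselJ p).continuous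
    fun_prop
  have hG0 : G 0 = 0 := by
    rcases eq_or_ne p 0 with rfl | hp
    · simp [G]
    · simp [G, besselJ_zero_of_ne_zero hp]
  rw [← intervalIntegral.integral_const_mul,
    intervalIntegral.integral_eq_sub_of_hasDerivAt (fun r _ => hG r) (hcont.intervalIntegrable _ _)]
  simp [G, hG0]

theorem stmt_0_general (p : ℕ) (κ n α : ℝ) (hκ : 0 < κ) (hn : 0 < n)
    (hbc1 : besselJ p (κ : ℂ) = (α : ℂ) * besselJ p ((Real.sqrt n * κ : ℝ) : ℂ))
    (hbc2 : besselJ' p (κ : ℂ) = (α : ℂ) * (Real.sqrt n : ℂ) * besselJ' p ((Real.sqrt n * κ : ℝ) : ℂ)) :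
    ∫ r in (0:ℝ)..1,
        ((besselJ p ((κ * r : ℝ) : ℂ)) ^ 2
          - (n : ℂ) * (α : ℂ) ^ 2 * (besselJ p ((Real.sqrt n * κ * r : ℝ) : ℂ)) ^ 2) * (r : ℂ)
      = (((1 - n) / 2 : ℝ) : ℂ) * (besselJ p (κ : ℂ)) ^ 2 := by
  have hsqrt : ((√n : ℝ) : ℂ) ^ 2 = n := by exact_mod_cast Real.sq_sqrt hn.le
  have hκ0 : (2 * κ ^ 2 : ℂ) ≠ 0 := by simpa using hκ.ne'
  have hint (μ : ℂ) : IntervalIntegrable (fun r : ℝ => besselJ p (μ * r) ^ 2 * r) MeasureTheory.volume 0 1 := by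
    have := (differentiable_besselJ p).continuous
    exact Continuous.intervalIntegrable (by fun_prop) _ _
  push_cast at hbc1 hbc2 ⊢
  simp_rw [sub_mul, mul_assoc (n : ℂ), mul_assoc ((α : ℂ) ^ 2)]
  rw [intervalIntegral.integral_sub (hint _) (((hint _).const_mul _).const_mul _),
    intervalIntegral.integral_const_mul, intervalIntegral.integral_const_mul]
  apply mul_left_cancel₀ hκ0
  have hlommel := besselJ_lommel_integral p κ
  rw [hbc1, hbc2] at hlommel
  rw [hbc1, ← hsqrt]
  linear_combination hlommel - α ^ 2 * besselJ_lommel_integral p (√n * κ)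

/-- the weighted energy integral of a real ITE eigenfunction pair. -/
theorem stmt_0 (p : ℕ) (κ n α : ℝ) (hκ : 0 < κ) (hn : 0 < n) (hn1 : n ≠ 1)
    (hbc1 : besselJ p (κ : ℂ) = (α : ℂ) * besselJ p ((Real.sqrt n * κ : ℝ) : ℂ))
    (hbc2 : besselJ' p (κ : ℂ) = (α : ℂ) * (Real.sqrt n : ℂ) * besselJ' p ((Real.sqrt n * κ : ℝ) : ℂ)) :
    ∫ r in (0:ℝ)..1,
        ((besselJ p ((κ * r : ℝ) : ℂ)) ^ 2
          - (n : ℂ) * (α : ℂ) ^ 2 * (besselJ p ((Real.sqrt n * κ * r : ℝ) : ℂ)) ^ 2) * (r : ℂ)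
      = (((1 - n) / 2 : ℝ) : ℂ) * (besselJ p (κ : ℂ)) ^ 2 :=
  stmt_0_general p κ n α hκ hn hbc1 hbc2
end

section
/- For every integer p ≥ 0, every real n > 0 and every κ ∈ ℂ, one has the symmetry F_p(√n·κ, 1/n) = −F_p(κ, n). In particular, κ is an ITE of the unit disk for the index of refraction n (with angular order p) if and only if √n·κ is an ITE for the index of refraction 1/n; equivalently, ITE trajectories satisfy κ_n = κ_{1/n}/√n. -/
open Complex Real Filter Set

/-- the symmetry `F_p(√n·κ, 1/n) = −F_p(κ, n)`. -/
theorem stmt_19 (p : ℕ) (n : ℝ) (hn : 0 < n) (κ : ℂ) :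
    Fp p ((Real.sqrt n : ℂ) * κ) (1 / n) = -Fp p κ n := by
  unfold Fp
  have hs : (Real.sqrt n : ℂ) ≠ 0 := by
    exact_mod_cast Complex.ofReal_ne_zero.mpr (ne_of_gt (Real.sqrt_pos.mpr hn))
  have h1 : ((Real.sqrt (1 / n) : ℝ) : ℂ) = 1 / (Real.sqrt n : ℂ) := by
    rw [one_div, Real.sqrt_inv]; push_cast; rw [one_div]
  rw [h1]
  have h2 : 1 / (Real.sqrt n : ℂ) * ((Real.sqrt n : ℂ) * κ) = κ := by
    field_simp
  rw [h2]
  field_simp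
  ring
end
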